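/- Let w be an involution in a Weyl group W and s a simple reflection with sw = ws and ℓ(sw) < ℓ(w). Then R_{sw} = {α ∈ R_w : ⟨α_s^∨, α⟩ = 0}, where R_z = {α ∈ R : z(α) = −α}. -/

import Mathlib

open scoped RealInnerProductSpace

variable {V : Type*} [NormedAddCommGroup V] [InnerProductSpace ℝ V] [FiniteDimensional ℝ V]

/-- The reflection in the hyperplane orthogonal to `α`. -/
noncomputable def wrefl (α : V) : V ≃ₗᵢ[ℝ] V := Submodule.reflection (ℝ ∙ α)ᗮ

/-- A (reduced) root system in a real inner product space. -/
structure IsRootSystem (R : Finset V) : Prop where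
  ne_zero : (0 : V) ∉ R
  span_eq_top : Submodule.span ℝ (R : Set V) = ⊤
  reduced : ∀ α ∈ R, ∀ c : ℝ, c • α ∈ R → c = 1 ∨ c = -1
  refl_mem : ∀ α ∈ R, ∀ β ∈ R, wrefl α β ∈ R
  pairing_int : ∀ α ∈ R, ∀ β ∈ R, ∃ n : ℤ, 2 * ⟪α, β⟫ / ⟪α, α⟫ = (n : ℝ)

/-- The Weyl group of a root system, as a group of linear isometries. -/
noncomputable def weylGroup (R : Finset V) : Subgroup (V ≃ₗᵢ[ℝ] V) :=
  Subgroup.closure (wrefl '' (R : Set V))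

/-- A system of positive roots. -/
structure IsPositiveSystem (R Rpos : Finset V) : Prop where
  subset : Rpos ⊆ R
  mem_or_neg_mem : ∀ α ∈ R, α ∈ Rpos ∨ -α ∈ Rpos
  not_mem_and_neg_mem : ∀ α ∈ Rpos, -α ∉ Rpos
  add_mem : ∀ α ∈ Rpos, ∀ β ∈ Rpos, α + β ∈ R → α + β ∈ Rpos

/-- A simple (indecomposable) positive root. -/
def IsSimpleRoot (Rpos : Finset V) (α : V) : Prop :=
  α ∈ Rpos ∧ ¬∃ β ∈ Rpos, ∃ γ ∈ Rpos, α = β + γ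

/-- The length of `w`, i.e. the number of positive roots sent by `w` to negative roots. -/
noncomputable def len (Rpos : Finset V) (w : V ≃ₗᵢ[ℝ] V) : ℕ := by
  classical exact (Rpos.filter fun α => w α ∉ Rpos).card

/-- The coroot attached to a root. -/
noncomputable def cv (α : V) : V := (2 / ⟪α, α⟫) • α

/-- The dominance order: `α ≤ α'` iff `α' - α` is a nonnegative combination of
positive roots. -/
def rle (Rpos : Finset V) (α α' : V) : Prop :=
  ∃ c : V → ℝ, (∀ β, 0 ≤ c β) ∧ α' - α = ∑ β ∈ Rpos, c β • β

/-- `α` is maximal in `S` for the dominance order. -/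
def IsMaxIn (Rpos : Finset V) (S : Set V) (α : V) : Prop :=
  α ∈ S ∧ ∀ α' ∈ S, rle Rpos α α' → rle Rpos α' α

/-- The `n`-th layer of Kostant's cascade: the maximal positive roots among those
orthogonal to all roots of the previous layers. -/
def cascadeLevel (Rpos : Finset V) : ℕ → Set V
  | n =>
    {α | IsMaxIn Rpos
      {β | β ∈ Rpos ∧ ∀ m, m < n → ∀ γ ∈ cascadeLevel Rpos m, ⟪γ, β⟫ = 0} α}
  termination_by n => n

/-- Kostant's cascade of orthogonal roots. -/
def cascade (Rpos : Finset V) : Set V := ⋃ n, cascadeLevel Rpos n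

/-- The set of positive roots on which an involution `w` acts by `-1`. -/
noncomputable def posNegSet (Rpos : Finset V) (w : V ≃ₗᵢ[ℝ] V) : Finset V := by
  classical exact Rpos.filter fun α => w α = -α

/-- The element `r_w`: the sum of the coroots of the cascade of the root system
`R_w = {α ∈ R : w α = -α}`. -/
noncomputable def rInv (Rpos : Finset V) (w : V ≃ₗᵢ[ℝ] V) : V :=
  ∑ α ∈ posNegSet Rpos w, Set.indicator (cascade (posNegSet Rpos w)) cv α

/-! Since `s_α` permutes the positive roots other than the simple root `α`, an element fixing `α`
cannot be shortened by `s_α`; so here `w α ≠ α`. If `s_α w β = -β` then `w β = -β + c α` with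
`c = ⟨α^∨, β⟩`, and applying the involution `w` once more gives `c (w α - α) = 0`, whence `c = 0`. -/

section

omit [FiniteDimensional ℝ V]

lemma wrefl_apply (α β : V) : wrefl α β = β - (2 * ⟪α, β⟫ / ⟪α, α⟫) • α := by
  rw [wrefl, Submodule.reflection_orthogonal_apply, Submodule.reflection_singleton_apply,
    real_inner_self_eq_norm_sq]
  simp only [RCLike.ofReal_real_eq_id, id_eq]
  module

lemma wrefl_wrefl (α β : V) : wrefl α (wrefl α β) = β :=
  Submodule.reflection_reflection _ β

lemma wrefl_self (α : V) : wrefl α α = -α :=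
  Submodule.reflection_orthogonalComplement_singleton_eq_neg α

namespace IsRootSystem

variable {R : Finset V} (hR : IsRootSystem R)
include hR

lemma ne_zero_of_mem {β : V} (hβ : β ∈ R) : β ≠ 0 := fun h => hR.ne_zero (h ▸ hβ)

lemma inner_self_pos {β : V} (hβ : β ∈ R) : 0 < ⟪β, β⟫ :=
  real_inner_self_pos.2 (hR.ne_zero_of_mem hβ)

lemma neg_mem {β : V} (hβ : β ∈ R) : -β ∈ R := by
  simpa [wrefl_self] using hR.refl_mem β hβ β hβ

lemma two_smul_not_mem {β : V} (hβ : β ∈ R) : (2 : ℝ) • β ∉ R := fun h => by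
  rcases hR.reduced β hβ 2 h with h2 | h2 <;> norm_num at h2

/-- Strict Cauchy–Schwarz, since the only roots proportional to `β` are `±β`. -/
lemma inner_mul_inner_lt {β γ : V} (hβ : β ∈ R) (hγ : γ ∈ R) (hγβ : γ ≠ β) (hγβ' : γ ≠ -β) :
    ⟪β, γ⟫ * ⟪β, γ⟫ < ⟪β, β⟫ * ⟪γ, γ⟫ := by
  refine (real_inner_mul_inner_self_le β γ).lt_of_ne fun h => ?_
  have habs : ‖⟪β, γ⟫‖ = ‖β‖ * ‖γ‖ := by
    rw [Real.norm_eq_abs, ← sq_eq_sq₀ (abs_nonneg _) (by positivity), sq_abs, mul_pow,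
      ← real_inner_self_eq_norm_sq, ← real_inner_self_eq_norm_sq, sq, h]
  obtain ⟨r, -, rfl⟩ :=
    (norm_inner_eq_norm_iff (hR.ne_zero_of_mem hβ) (hR.ne_zero_of_mem hγ)).1 habs
  rcases hR.reduced β hβ r hγ with rfl | rfl
  · exact hγβ (one_smul ℝ β)
  · exact hγβ' (neg_one_smul ℝ β)

/-- The Cartan integers `n = ⟨β^∨, γ⟩` and `m = ⟨γ^∨, β⟩` are negative with `n m < 4`, so one of
them is `-1` and the corresponding reflection sends one root to `β + γ`. -/
lemma add_mem_of_inner_neg {β γ : V} (hβ : β ∈ R) (hγ : γ ∈ R) (hγβ : γ ≠ -β)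
    (hneg : ⟪β, γ⟫ < 0) : β + γ ∈ R := by
  have hβpos := hR.inner_self_pos hβ
  have hγpos := hR.inner_self_pos hγ
  have hγβ' : γ ≠ β := by rintro rfl; linarith
  have hcs := hR.inner_mul_inner_lt hβ hγ hγβ' hγβ
  obtain ⟨n, hn⟩ := hR.pairing_int β hβ γ hγ
  obtain ⟨m, hm⟩ := hR.pairing_int γ hγ β hβ
  rw [real_inner_comm] at hm
  rw [div_eq_iff hβpos.ne'] at hn
  rw [div_eq_iff hγpos.ne'] at hm
  have hn0 : n < 0 := by exact_mod_cast (show (n : ℝ) < 0 by nlinarith)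
  have hm0 : m < 0 := by exact_mod_cast (show (m : ℝ) < 0 by nlinarith)
  have hnm : n * m < 4 := by exact_mod_cast (show (n : ℝ) * m < 4 by nlinarith)
  obtain rfl | rfl : n = -1 ∨ m = -1 := by
    by_contra! h
    nlinarith [show n ≤ -2 by omega, show m ≤ -2 by omega]
  · convert hR.refl_mem β hβ γ hγ using 1
    rw [wrefl_apply, div_eq_of_eq_mul hβpos.ne' hn]
    push_cast
    module
  · convert hR.refl_mem γ hγ β hβ using 1
    rw [wrefl_apply, real_inner_comm, div_eq_of_eq_mul hγpos.ne' hm]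
    push_cast
    module

lemma sub_mem_of_inner_pos {β γ : V} (hβ : β ∈ R) (hγ : γ ∈ R) (hγβ : γ ≠ β)
    (hpos : 0 < ⟪β, γ⟫) : γ - β ∈ R := by
  rw [sub_eq_neg_add]
  exact hR.add_mem_of_inner_neg (hR.neg_mem hβ) hγ (by rwa [neg_neg])
    (by rwa [inner_neg_left, neg_neg_iff_pos])

end IsRootSystem

namespace IsSimpleRoot

variable {R Rpos : Finset V} (hR : IsRootSystem R) (hP : IsPositiveSystem R Rpos)
  {α : V} (hα : IsSimpleRoot Rpos α)
include hR hP hα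

/-- Moving `γ` one step along its `α`-string keeps it positive and changes `n` by one, so a
descent to `n = 0` ends at `δ = -γ`; the only escape would decompose `α`. -/
lemma add_ne_int_smul (n : ℤ) {γ δ : V} (hγ : γ ∈ Rpos) (hδ : δ ∈ Rpos) (hγα : γ ≠ α)
    (hδα : δ ≠ α) : γ + δ ≠ (n : ℝ) • α := by
  have hαR : α ∈ R := hP.subset hα.1
  have hαpos := hR.inner_self_pos hαR
  have inner_sum {m : ℤ} {γ δ : V} (h : γ + δ = (m : ℝ) • α) :
      ⟪α, γ⟫ + ⟪α, δ⟫ = m * ⟪α, α⟫ := by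
    rw [← inner_add_right, h, real_inner_smul_right]
  induction n generalizing γ δ with
  | zero =>
    intro h
    rw [Int.cast_zero, zero_smul, add_eq_zero_iff_eq_neg'] at h
    exact hP.not_mem_and_neg_mem γ hγ (h ▸ hδ)
  | succ i ih =>
    intro h
    wlog hpos : 0 < ⟪α, γ⟫ generalizing γ δ
    · refine this hδ hγ hδα hγα (by rwa [add_comm]) ?_
      have := inner_sum h
      push_cast at this
      nlinarith
    have hγR : γ ∈ R := hP.subset hγ
    rcases hP.mem_or_neg_mem _ (hR.sub_mem_of_inner_pos hαR hγR hγα hpos) with hsub | hsub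
    · have hsubα : γ - α ≠ α := fun h' => hR.two_smul_not_mem hαR <| by
        rwa [two_smul, ← sub_eq_iff_eq_add.1 h']
      refine ih hsub hδ hsubα hδα ?_
      rw [sub_add_eq_add_sub, h]
      push_cast
      module
    · exact hα.2 ⟨γ, hγ, _, hsub, by abel⟩
  | pred i ih =>
    intro h
    wlog hneg : ⟪α, γ⟫ < 0 generalizing γ δ
    · refine this hδ hγ hδα hγα (by rwa [add_comm]) ?_
      have := inner_sum h
      push_cast at this
      nlinarith
    have hγR : γ ∈ R := hP.subset hγ
    have hγ' : γ ≠ -α := fun h' => hP.not_mem_and_neg_mem α hα.1 (h' ▸ hγ)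
    have hadd : α + γ ∈ Rpos :=
      hP.add_mem α hα.1 γ hγ (hR.add_mem_of_inner_neg hαR hγR hγ' hneg)
    have haddα : α + γ ≠ α := by
      simpa using hR.ne_zero_of_mem hγR
    refine ih hadd hδ haddα hδα ?_
    rw [add_assoc, h]
    push_cast
    module

lemma wrefl_mem {γ : V} (hγ : γ ∈ Rpos) (hγα : γ ≠ α) : wrefl α γ ∈ Rpos := by
  have hαR : α ∈ R := hP.subset hα.1
  have hγR : γ ∈ R := hP.subset hγ
  by_contra hneg
  have hδ : -wrefl α γ ∈ Rpos :=
    (hP.mem_or_neg_mem _ (hR.refl_mem α hαR γ hγR)).resolve_left hneg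
  obtain ⟨n, hn⟩ := hR.pairing_int α hαR γ hγR
  refine hα.add_ne_int_smul hR hP n hγ hδ hγα (fun h => hγα ?_) ?_
  · rw [neg_eq_iff_eq_neg] at h
    rw [← wrefl_wrefl α γ, h, map_neg, wrefl_self, neg_neg]
  · rw [wrefl_apply, hn]
    abel

lemma len_le_len_wrefl_mul {w : V ≃ₗᵢ[ℝ] V} (hwα : w α = α) :
    len Rpos w ≤ len Rpos (wrefl α * w) := by
  classical
  refine Finset.card_le_card fun β => ?_
  simp only [Finset.mem_filter]
  rintro ⟨hβ, hwβ⟩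
  refine ⟨hβ, fun hs => ?_⟩
  change wrefl α (w β) ∈ Rpos at hs
  by_cases hsα : wrefl α (w β) = α
  · have hwβα : w β = -α := by rw [← wrefl_wrefl α (w β), hsα, wrefl_self]
    have : β = -α := w.injective <| by rw [hwβα, map_neg, hwα]
    exact hP.not_mem_and_neg_mem α hα.1 (this ▸ hβ)
  · exact hwβ (by simpa only [wrefl_wrefl] using hα.wrefl_mem hR hP hs hsα)

end IsSimpleRoot

lemma wrefl_mul_apply_eq_neg_iff {w : V ≃ₗᵢ[ℝ] V} (hw2 : w * w = 1) {α : V} (hwα : w α ≠ α)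
    (β : V) : (wrefl α * w) β = -β ↔ w β = -β ∧ 2 * ⟪α, β⟫ / ⟪α, α⟫ = 0 := by
  set c := 2 * ⟪α, β⟫ / ⟪α, α⟫
  have hsneg : wrefl α (-β) = -β + c • α := by
    rw [map_neg, wrefl_apply]
    abel
  change wrefl α (w β) = -β ↔ _
  constructor
  · intro h
    have hwβ : w β = -β + c • α := by rw [← hsneg, ← h, wrefl_wrefl]
    have hww : w (w β) = β := congrArg (· β) hw2
    rw [hwβ, map_add, map_neg, hwβ, map_smul] at hww
    have hc : c • (w α - α) = 0 := by rw [smul_sub, ← sub_eq_zero.2 hww]; abel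
    have hc0 : c = 0 := (smul_eq_zero.1 hc).resolve_right (sub_ne_zero.2 hwα)
    exact ⟨by rw [hwβ, hc0, zero_smul, add_zero], hc0⟩
  · rintro ⟨hwβ, hc0⟩
    rw [hwβ, hsneg, hc0, zero_smul, add_zero]

end

theorem negRoots_of_commuting_descent_general
    {R Rpos : Finset V} (hR : IsRootSystem R) (hP : IsPositiveSystem R Rpos)
    (w : V ≃ₗᵢ[ℝ] V) (hw2 : w * w = 1)
    (α : V) (hα : IsSimpleRoot Rpos α)
    (hlen : len Rpos (wrefl α * w) < len Rpos w) :
    {β : V | β ∈ R ∧ (wrefl α * w) β = -β} =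
      {β : V | (β ∈ R ∧ w β = -β) ∧ 2 * ⟪α, β⟫ / ⟪α, α⟫ = 0} := by
  have hwα : w α ≠ α := fun h => (hα.len_le_len_wrefl_mul hR hP h).not_gt hlen
  ext β
  simp only [Set.mem_ofPred_eq, wrefl_mul_apply_eq_neg_iff hw2 hwα, and_assoc]

/-- If `w` is an involution in the Weyl group and `s` is a simple reflection with
`sw = ws` and `ℓ(sw) < ℓ(w)`, then `R_{sw} = {α ∈ R_w : ⟨α_s^∨, α⟩ = 0}`. -/
theorem negRoots_of_commuting_descent
    {R Rpos : Finset V} (hR : IsRootSystem R) (hP : IsPositiveSystem R Rpos)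
    (w : V ≃ₗᵢ[ℝ] V) (hw : w ∈ weylGroup R) (hw2 : w * w = 1)
    (α : V) (hα : IsSimpleRoot Rpos α)
    (hc : wrefl α * w = w * wrefl α)
    (hlen : len Rpos (wrefl α * w) < len Rpos w) :
    {β : V | β ∈ R ∧ (wrefl α * w) β = -β} =
      {β : V | (β ∈ R ∧ w β = -β) ∧ 2 * ⟪α, β⟫ / ⟪α, α⟫ = 0} :=
  negRoots_of_commuting_descent_general hR hP w hw2 α hα hlen
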